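/- Assume in addition that K is algebraically closed. Then for every K-linear bijection f of the space of 3×3 trace-zero matrices over K satisfying f(x∗y) = f(x)∗f(y) for all trace-zero x, y, there exists an invertible 3×3 matrix p over K such that f(x) = p·x·p⁻¹ for all trace-zero x. (The automorphism group of the pseudo-octonion algebra is Int(sl(3,K)) ≅ PGL(3,K).) -/

import Mathlib

/-- The product of the pseudo-octonion algebra on `3 × 3` matrices:
`x ∗ y = μ·xy + (1−μ)·yx − (1/3)·tr(xy)·I₃`. -/
noncomputable def pstar (K : Type*) [Field K] (μ : K)
    (x y : Matrix (Fin 3) (Fin 3) K) : Matrix (Fin 3) (Fin 3) K :=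
  μ • (x * y) + (1 - μ) • (y * x) - ((x * y).trace / 3) • (1 : Matrix (Fin 3) (Fin 3) K)

/-- The space of `3 × 3` trace-zero matrices over `K`. -/
noncomputable def sl3 (K : Type*) [Field K] : Submodule K (Matrix (Fin 3) (Fin 3) K) :=
  LinearMap.ker (Matrix.traceLinearMap (Fin 3) K K)

/-!
For trace-zero `x`, Cayley–Hamilton gives `(x ∗ x) ∗ x = (tr(x²)/6)·x`, so an automorphism `f`
preserves the trace form `tr(xy)`. Since `μ·(x ∗ y) − (1 − μ)·(y ∗ x) = (2μ − 1)·(xy − tr(xy)/3)`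
and `2μ ≠ 1`, `f` also preserves the trace-free part of the matrix product. Hence `f`, extended by
the identity on scalar matrices, is an algebra automorphism of `M₃(K)`, and every such automorphism
is inner (`AlgEquiv.eq_linearEquivConjAlgEquiv`).
-/

open Matrix

theorem Matrix.exists_isUnit_algEquiv_eq_conj {n K : Type*} [Fintype n] [DecidableEq n] [Field K]
    (φ : Matrix n n K ≃ₐ[K] Matrix n n K) :
    ∃ p : Matrix n n K, IsUnit p ∧ ∀ m, φ m = p * m * p⁻¹ := by
  obtain ⟨T, hT⟩ := (toLinAlgEquiv'.symm.trans (φ.trans toLinAlgEquiv')).eq_linearEquivConjAlgEquiv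
  set p := toLinAlgEquiv'.symm (T : Module.End K (n → K))
  have hinv : p * toLinAlgEquiv'.symm (T.symm : Module.End K (n → K)) = 1 := by
    rw [← map_mul, Module.End.mul_eq_comp, LinearEquiv.comp_coe, T.symm_trans_self]
    exact map_one _
  refine ⟨p, .of_mul_eq_one _ hinv, fun m => toLinAlgEquiv'.injective ?_⟩
  have hTm := congr($hT (toLinAlgEquiv' m))
  rw [AlgEquiv.trans_apply, AlgEquiv.trans_apply, AlgEquiv.symm_apply_apply] at hTm
  rw [hTm, inv_eq_right_inv hinv, map_mul, map_mul]
  simp [p, LinearEquiv.conjAlgEquiv_apply, Module.End.mul_eq_comp, LinearMap.comp_assoc]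

noncomputable section

variable {K : Type*} [Field K]

local notation "𝕄" => Matrix (Fin 3) (Fin 3) K

theorem smul_pstar_sub_smul_pstar_swap (μ : K) (x y : 𝕄) :
    μ • pstar K μ x y - (1 - μ) • pstar K μ y x =
      (2 * μ - 1) • (x * y - ((x * y).trace / 3) • (1 : 𝕄)) := by
  rw [pstar, pstar, trace_mul_comm y x]
  module

theorem mem_sl3 {m : 𝕄} : m ∈ sl3 K ↔ m.trace = 0 := LinearMap.mem_ker

variable [CharZero K]

theorem Matrix.cube_eq_of_trace_eq_zero {m : 𝕄} (hm : m.trace = 0) :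
    m * m * m = ((m * m).trace / 2) • m + ((m * m * m).trace / 3) • (1 : 𝕄) := by
  have h22 : m 2 2 = -(m 0 0 + m 1 1) := by
    simp only [trace, Fin.sum_univ_three, diag] at hm
    linear_combination hm
  ext i j
  fin_cases i <;> fin_cases j <;>
    · simp only [Fin.zero_eta, Fin.mk_one, Fin.reduceFinMk, Fin.isValue, mul_apply,
        Fin.sum_univ_three, h22, trace, diag_apply, add_apply, smul_apply, smul_eq_mul, one_apply,
        Fin.reduceEq, ↓reduceIte]
      field_simp
      ring

theorem trace_pstar (μ : K) (x y : 𝕄) : (pstar K μ x y).trace = 0 := by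
  simp only [pstar, trace_sub, trace_add, trace_smul, trace_mul_comm y x, trace_one,
    Fintype.card_fin, Nat.cast_ofNat, smul_eq_mul]
  field_simp
  ring

theorem pstar_self (μ : K) (m : 𝕄) : pstar K μ m m = m * m - ((m * m).trace / 3) • (1 : 𝕄) := by
  unfold pstar
  module

theorem pstar_pstar_self_left (μ : K) {m : 𝕄} (hm : m.trace = 0) :
    pstar K μ (pstar K μ m m) m = ((m * m).trace / 6) • m := by
  rw [pstar_self, pstar]
  simp only [sub_mul, mul_sub, smul_mul_assoc, mul_smul_comm, Matrix.one_mul, Matrix.mul_one,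
    ← Matrix.mul_assoc, trace_sub, trace_smul, hm, smul_zero, sub_zero]
  have hcube := Matrix.cube_eq_of_trace_eq_zero hm
  generalize (m * m * m).trace = s at hcube ⊢
  rw [hcube]
  module

namespace sl3

def proj : 𝕄 →ₗ[K] sl3 K where
  toFun m := ⟨m - (m.trace / 3) • 1, mem_sl3.2 <| by simp⟩
  map_add' m n := by
    ext1
    simp only [trace_add, Submodule.coe_add]
    module
  map_smul' c m := by
    ext1
    simp only [trace_smul, smul_eq_mul, SetLike.val_smul, RingHom.id_apply]
    module

theorem coe_proj (m : 𝕄) : (proj m : 𝕄) = m - (m.trace / 3) • 1 := rfl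

theorem proj_coe (x : sl3 K) : proj (x : 𝕄) = x := by
  ext1
  simp [coe_proj, mem_sl3.1 x.2]

theorem proj_one : proj (1 : 𝕄) = 0 := by
  ext1
  simp [coe_proj]

theorem coe_proj_add_smul_one (m : 𝕄) : (proj m : 𝕄) + (m.trace / 3) • 1 = m := by
  simp [coe_proj]

def extend (f : sl3 K →ₗ[K] sl3 K) : 𝕄 →ₗ[K] 𝕄 :=
  (sl3 K).subtype ∘ₗ f ∘ₗ proj + (LinearMap.id - (sl3 K).subtype ∘ₗ proj)

variable {f : sl3 K →ₗ[K] sl3 K}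

theorem extend_apply (m : 𝕄) : extend f m = f (proj m) + (m.trace / 3) • 1 := by
  simp [extend, coe_proj]

theorem extend_coe (x : sl3 K) : extend f x = f x := by
  simp [extend_apply, proj_coe, mem_sl3.1 x.2]

theorem extend_one : extend f 1 = 1 := by
  simp [extend_apply, proj_one]

theorem extend_injective (hf : Function.Injective f) : Function.Injective (extend f) := by
  rw [← LinearMap.ker_eq_bot, LinearMap.ker_eq_bot']
  intro m hm
  rw [extend_apply] at hm
  have htr : m.trace = 0 := by simpa [mem_sl3.1 (f (proj m)).2] using congr(trace $hm)
  have hproj : proj m = 0 := hf (by simpa [htr] using hm)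
  rw [← coe_proj_add_smul_one m, hproj, htr]
  simp

theorem extend_mul (h : ∀ x y : sl3 K, extend f ((x : 𝕄) * y) = f x * f y) (m n : 𝕄) :
    extend f (m * n) = extend f m * extend f n := by
  suffices ∀ (x y : sl3 K) (a b : K), extend f ((x + a • 1) * (y + b • 1)) =
      extend f (x + a • 1) * extend f (y + b • 1) by
    simpa only [coe_proj_add_smul_one] using this (proj m) (proj n) (m.trace / 3) (n.trace / 3)
  intro x y a b
  have hexpand : ((x : 𝕄) + a • 1) * (y + b • 1) = x * y + b • x + a • y + (a * b) • 1 := by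
    simp only [add_mul, mul_add, smul_mul_assoc, mul_smul_comm, Matrix.one_mul, Matrix.mul_one]
    module
  simp only [hexpand, map_add, map_smul, extend_coe, extend_one, h, add_mul, mul_add,
    smul_mul_assoc, mul_smul_comm, Matrix.one_mul, Matrix.mul_one]
  module

def extendAlgEquiv (f : sl3 K ≃ₗ[K] sl3 K)
    (h : ∀ x y : sl3 K, extend (f : sl3 K →ₗ[K] sl3 K) ((x : 𝕄) * y) = f x * f y) :
    𝕄 ≃ₐ[K] 𝕄 :=
  AlgEquiv.ofBijective (AlgHom.ofLinearMap (extend f) extend_one (extend_mul h))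
    ⟨extend_injective f.injective,
      LinearMap.injective_iff_surjective.1 (extend_injective f.injective)⟩

def pmul (μ : K) (x y : sl3 K) : sl3 K := ⟨pstar K μ x y, mem_sl3.2 (trace_pstar μ x y)⟩

theorem pmul_pmul_self_left (μ : K) (x : sl3 K) :
    pmul μ (pmul μ x x) x = (((x : 𝕄) * x).trace / 6) • x :=
  Subtype.ext (pstar_pstar_self_left μ (mem_sl3.1 x.2))

variable {μ : K}

theorem trace_mul_self_map (hinj : Function.Injective f)
    (hf : ∀ x y, f (pmul μ x y) = pmul μ (f x) (f y)) (x : sl3 K) :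
    ((f x : 𝕄) * f x).trace = ((x : 𝕄) * x).trace := by
  rcases eq_or_ne x 0 with rfl | hx
  · simp
  have hfx : f x ≠ 0 := (map_ne_zero_iff f hinj).2 hx
  have h := congr(f $(pmul_pmul_self_left μ x))
  rw [hf, hf, pmul_pmul_self_left, map_smul] at h
  linear_combination 6 * smul_left_injective K hfx h

theorem trace_mul_map (hinj : Function.Injective f)
    (hf : ∀ x y, f (pmul μ x y) = pmul μ (f x) (f y)) (x y : sl3 K) :
    ((f x : 𝕄) * f y).trace = ((x : 𝕄) * y).trace := by
  have hxy := trace_mul_self_map hinj hf (x + y)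
  have hx := trace_mul_self_map hinj hf x
  have hy := trace_mul_self_map hinj hf y
  simp only [map_add, Submodule.coe_add, add_mul, mul_add, trace_add] at hxy
  rw [trace_mul_comm (y : 𝕄) x, trace_mul_comm (f y : 𝕄) (f x)] at hxy
  linear_combination (hxy - hx - hy) / 2

theorem extend_mul_of_map_pmul (hinj : Function.Injective f)
    (hf : ∀ x y, f (pmul μ x y) = pmul μ (f x) (f y))
    (hμ : 2 * μ - 1 ≠ 0) (x y : sl3 K) :
    extend f ((x : 𝕄) * y) = f x * f y := by
  have hproj : proj ((x : 𝕄) * (y : 𝕄)) =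
      (2 * μ - 1)⁻¹ • (μ • pmul μ x y - (1 - μ) • pmul μ y x) := by
    ext1
    simp [coe_proj, pmul, smul_pstar_sub_smul_pstar_swap, smul_smul, inv_mul_cancel₀ hμ]
  rw [extend_apply, hproj, map_smul, map_sub, map_smul, map_smul, hf, hf]
  simp [pmul, smul_pstar_sub_smul_pstar_swap, smul_smul, inv_mul_cancel₀ hμ,
    trace_mul_map hinj hf]

end sl3

end

theorem pseudoOctonion_aut_is_inner_general
    (K : Type*) [Field K] [CharZero K]
    (ω : K) (hω3 : ω ^ 3 = 1)
    (f : sl3 K ≃ₗ[K] sl3 K)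
    (hf : ∀ x y z : sl3 K,
      (z : Matrix (Fin 3) (Fin 3) K) = pstar K ((1 - ω) / 3) x y →
      (f z : Matrix (Fin 3) (Fin 3) K) = pstar K ((1 - ω) / 3) (f x) (f y)) :
    ∃ p : Matrix (Fin 3) (Fin 3) K, IsUnit p ∧
      ∀ x : sl3 K,
        (f x : Matrix (Fin 3) (Fin 3) K) = p * (x : Matrix (Fin 3) (Fin 3) K) * p⁻¹ := by
  have hμ : 2 * ((1 - ω) / 3) - 1 ≠ 0 := by
    intro h
    have hω : ω = -1 / 2 := by linear_combination -(3 / 2 : K) * h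
    norm_num [hω] at hω3
  have hpmul (x y : sl3 K) : f (sl3.pmul _ x y) = sl3.pmul _ (f x) (f y) :=
    Subtype.ext (hf x y _ rfl)
  obtain ⟨p, hp, hconj⟩ := Matrix.exists_isUnit_algEquiv_eq_conj
    (sl3.extendAlgEquiv f (sl3.extend_mul_of_map_pmul f.injective hpmul hμ))
  refine ⟨p, hp, fun x => ?_⟩
  rw [← hconj]
  exact (sl3.extend_coe x).symm

/-- Over an algebraically closed field, every automorphism of the pseudo-octonion algebra
is conjugation by an invertible matrix: `Aut(P) ≅ Int(sl(3,K)) ≅ PGL(3,K)`. -/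
theorem pseudoOctonion_aut_is_inner
    (K : Type*) [Field K] [CharZero K] [IsAlgClosed K]
    (ω : K) (hω1 : ω ≠ 1) (hω3 : ω ^ 3 = 1)
    (f : sl3 K ≃ₗ[K] sl3 K)
    (hf : ∀ x y z : sl3 K,
      (z : Matrix (Fin 3) (Fin 3) K) = pstar K ((1 - ω) / 3) x y →
      (f z : Matrix (Fin 3) (Fin 3) K) = pstar K ((1 - ω) / 3) (f x) (f y)) :
    ∃ p : Matrix (Fin 3) (Fin 3) K, IsUnit p ∧
      ∀ x : sl3 K,
        (f x : Matrix (Fin 3) (Fin 3) K) = p * (x : Matrix (Fin 3) (Fin 3) K) * p⁻¹ :=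
  pseudoOctonion_aut_is_inner_general K ω hω3 f hf
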